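/- Fix m, p, L, N ∈ ℕ, a data pair (u_d, y_d) of length T, an initial pair (u_ini, y_ini) of length T_ini, and a future input u_f : {0,…,T_f−1} → ℝ^m with T_f ≥ 1. Let ℓ ∈ ℕ be such that T_ini ≥ ℓ and ℓ(C',A') ≤ ℓ for every explaining system (n', A', B', C', D'). Suppose there exist y_f : {0,…,T_f−1} → ℝ^p and vectors g₁ ∈ ℝ^{T−ℓ−T_f+1} (this term present only if T ≥ ℓ+T_f, otherwise omitted) and g₂ ∈ ℝ^{T_ini−ℓ−T_f+1} (present only if T_ini ≥ ℓ+T_f, otherwise omitted) such that H_{ℓ+T_f}(u_d) g₁ + H_{ℓ+T_f}(u_ini) g₂ equals the stacked vector (u_ini(T_ini−ℓ), …, u_ini(T_ini−1), u_f(0), …, u_f(T_f−1)) and H_{ℓ+T_f}(y_d) g₁ + H_{ℓ+T_f}(y_ini) g₂ equals the stacked vector (y_ini(T_ini−ℓ), …, y_ini(T_ini−1), y_f(0), …, y_f(T_f−1)). Then for every explaining system (n', A', B', C', D'), the concatenation (u_ini·u_f, y_ini·y_f) is a trajectory of length T_ini+T_f of (A',B',C',D'), and moreover for each explaining system y_f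 is the unique output with this property; in particular (u_d, y_d) is informative for unique prediction of u_f from (u_ini, y_ini). -/

import Mathlib

/-!
For `lag A C ≤ ℓ`, the kernels of the observability matrices stabilise from depth `ℓ` on, so a
state whose free response vanishes for `ℓ` steps is unobservable. Every explaining system is
linear and time invariant, so the Hankel identities exhibit the window (the last `ℓ` initial
samples followed by `(uf, yf)`) as a linear combination of shifted trajectories, hence as a
trajectory. It overlaps the initial trajectory on `ℓ` samples, so the state mismatch at the
start of the overlap is unobservable and the two glue to a trajectory of length `Tini + Tf`.
Two continuations of the same initial trajectory differ by a free response vanishing on the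
last `ℓ` initial samples, hence everywhere: this gives uniqueness.
-/

/-- `(u, y)` is a trajectory of length `T` of the linear system `(A, B, C, D)`. -/
def IsTraj {n m p : ℕ} (A : Matrix (Fin n) (Fin n) ℝ) (B : Matrix (Fin n) (Fin m) ℝ)
    (C : Matrix (Fin p) (Fin n) ℝ) (D : Matrix (Fin p) (Fin m) ℝ)
    (T : ℕ) (u : Fin T → Fin m → ℝ) (y : Fin T → Fin p → ℝ) : Prop :=
  ∃ x : Fin (T + 1) → Fin n → ℝ,
    ∀ t : Fin T,
      x t.succ = A.mulVec (x t.castSucc) + B.mulVec (u t) ∧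
      y t = C.mulVec (x t.castSucc) + D.mulVec (u t)

/-- Observability matrix of depth `k` of the pair `(C, A)`. -/
noncomputable def obsMat {n p : ℕ} (A : Matrix (Fin n) (Fin n) ℝ)
    (C : Matrix (Fin p) (Fin n) ℝ) (k : ℕ) : Matrix (Fin k × Fin p) (Fin n) ℝ :=
  fun ir j => (C * A ^ (ir.1 : ℕ)) ir.2 j

/-- The lag of the pair `(C, A)`: the least `k` with `rank O_k = rank O_{k+1}`. -/
noncomputable def lag {n p : ℕ} (A : Matrix (Fin n) (Fin n) ℝ)
    (C : Matrix (Fin p) (Fin n) ℝ) : ℕ :=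
  sInf {k | (obsMat A C k).rank = (obsMat A C (k + 1)).rank}

/-- `(n', A', B', C', D')` is an explaining system for the data `(ud, yd)` and the
initial trajectory `(uini, yini)`, within the model class of order at most `N` and
lag at most `L`. -/
def Explaining {m p : ℕ} (L N T Tini : ℕ)
    (ud : Fin T → Fin m → ℝ) (yd : Fin T → Fin p → ℝ)
    (uini : Fin Tini → Fin m → ℝ) (yini : Fin Tini → Fin p → ℝ)
    {n' : ℕ} (A' : Matrix (Fin n') (Fin n') ℝ) (B' : Matrix (Fin n') (Fin m) ℝ)
    (C' : Matrix (Fin p) (Fin n') ℝ) (D' : Matrix (Fin p) (Fin m) ℝ) : Prop :=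
  n' ≤ N ∧ lag A' C' ≤ L ∧ IsTraj A' B' C' D' T ud yd ∧ IsTraj A' B' C' D' Tini uini yini

/-- The data `(ud, yd)` is informative for unique prediction of `uf` from
`(uini, yini)`: (i) every explaining system has exactly one response `yf` to `uf`
extending `(uini, yini)`, and (ii) some `yf` works for all explaining systems. -/
def Informative {m p : ℕ} (L N T Tini Tf : ℕ)
    (ud : Fin T → Fin m → ℝ) (yd : Fin T → Fin p → ℝ)
    (uini : Fin Tini → Fin m → ℝ) (yini : Fin Tini → Fin p → ℝ)
    (uf : Fin Tf → Fin m → ℝ) : Prop :=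
  (∀ (n' : ℕ) (A' : Matrix (Fin n') (Fin n') ℝ) (B' : Matrix (Fin n') (Fin m) ℝ)
      (C' : Matrix (Fin p) (Fin n') ℝ) (D' : Matrix (Fin p) (Fin m) ℝ),
      Explaining L N T Tini ud yd uini yini A' B' C' D' →
      ∃! yf : Fin Tf → Fin p → ℝ,
        IsTraj A' B' C' D' (Tini + Tf) (Fin.append uini uf) (Fin.append yini yf)) ∧
  (∃ yf : Fin Tf → Fin p → ℝ,
      ∀ (n' : ℕ) (A' : Matrix (Fin n') (Fin n') ℝ) (B' : Matrix (Fin n') (Fin m) ℝ)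
        (C' : Matrix (Fin p) (Fin n') ℝ) (D' : Matrix (Fin p) (Fin m) ℝ),
        Explaining L N T Tini ud yd uini yini A' B' C' D' →
        IsTraj A' B' C' D' (Tini + Tf) (Fin.append uini uf) (Fin.append yini yf))

open Matrix Module

lemma hankel_index_lt {K T : ℕ} (i : Fin K) (j : Fin (T + 1 - K)) : (i : ℕ) + j < T := by
  have := i.2
  have := j.2
  omega

lemma window_index_lt {ℓ a : ℕ} (hℓ : ℓ ≤ a) (r : Fin ℓ) : a - ℓ + r < a := by
  have := r.2
  omega

lemma Fin.append_drop_append_apply {α : Type*} {a b ℓ : ℕ} (hℓ : ℓ ≤ a) (u : Fin a → α)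
    (v : Fin b → α) (i : Fin (ℓ + b)) :
    Fin.append (fun r : Fin ℓ => u ⟨a - ℓ + r, window_index_lt hℓ r⟩) v i =
      Fin.append u v ⟨a - ℓ + i, by omega⟩ := by
  refine Fin.addCases (fun r => ?_) (fun r => ?_) i
  · rw [Fin.append_left]
    exact (Fin.append_left u v ⟨a - ℓ + r, by omega⟩).symm
  · rw [Fin.append_right]
    exact ((congrArg (Fin.append u v) (Fin.ext (by simp; omega))).trans
      (Fin.append_right u v r)).symm

lemma extend_val_append_castAdd {α : Type*} [Zero α] {a b : ℕ} (u : Fin a → α)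
    (v : Fin b → α) (i : Fin a) : Function.extend Fin.val (Fin.append u v) 0 i = u i :=
  (Fin.val_injective.extend_apply _ 0 (Fin.castAdd b i)).trans (Fin.append_left u v i)

lemma extend_val_append_natAdd {α : Type*} [Zero α] {a b : ℕ} (u : Fin a → α)
    (v : Fin b → α) (i : Fin b) : Function.extend Fin.val (Fin.append u v) 0 (a + i) = v i :=
  (Fin.val_injective.extend_apply _ 0 (Fin.natAdd a i)).trans (Fin.append_right u v i)

section Observability

variable {n p : ℕ} (A : Matrix (Fin n) (Fin n) ℝ) (C : Matrix (Fin p) (Fin n) ℝ)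

noncomputable def obsKer (k : ℕ) : Submodule ℝ (Fin n → ℝ) :=
  LinearMap.ker (obsMat A C k).mulVecLin

def Unobservable (v : Fin n → ℝ) : Prop :=
  ∀ k, (C * A ^ k) *ᵥ v = 0

variable {A C}

lemma mem_obsKer {k : ℕ} {v : Fin n → ℝ} :
    v ∈ obsKer A C k ↔ ∀ i < k, (C * A ^ i) *ᵥ v = 0 := by
  simp [obsKer, funext_iff, Fin.forall_iff, mulVec, obsMat, dotProduct]

variable (A C)

lemma obsKer_antitone : Antitone (obsKer A C) := fun _ _ hab _ hv =>
  mem_obsKer.2 fun i hi => mem_obsKer.1 hv i (hi.trans_le hab)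

lemma rank_obsMat_add_finrank_obsKer (k : ℕ) :
    (obsMat A C k).rank + finrank ℝ (obsKer A C k) = n := by
  have h := LinearMap.finrank_range_add_finrank_ker (obsMat A C k).mulVecLin
  rwa [finrank_fin_fun] at h

lemma rank_obsMat_eq_succ_iff (k : ℕ) :
    (obsMat A C k).rank = (obsMat A C (k + 1)).rank ↔
      obsKer A C (k + 1) = obsKer A C k := by
  have hk := rank_obsMat_add_finrank_obsKer A C k
  have hk' := rank_obsMat_add_finrank_obsKer A C (k + 1)
  refine ⟨fun h => Submodule.eq_of_le_of_finrank_eq (obsKer_antitone A C k.le_succ) ?_,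
    fun h => ?_⟩
  · omega
  · rw [h] at hk'
    omega

lemma obsKer_lag_succ : obsKer A C (lag A C + 1) = obsKer A C (lag A C) := by
  -- `lag` is an `sInf`, so its defining set has to be shown nonempty (`sInf ∅ = 0`):
  -- decreasing chains of subspaces stabilise.
  obtain ⟨k, hk⟩ := IsArtinian.monotone_stabilizes
    ⟨fun k => OrderDual.toDual (obsKer A C k), obsKer_antitone A C⟩
  have hstab : obsKer A C (k + 1) = obsKer A C k := (hk (k + 1) k.le_succ).symm
  exact (rank_obsMat_eq_succ_iff A C _).1
    (Nat.sInf_mem (s := {k | (obsMat A C k).rank = (obsMat A C (k + 1)).rank})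
      ⟨k, (rank_obsMat_eq_succ_iff A C k).2 hstab⟩)

variable {A C}

lemma obsKer_add_succ_eq {k : ℕ} (h : obsKer A C (k + 1) = obsKer A C k) (j : ℕ) :
    obsKer A C (k + j + 1) = obsKer A C (k + j) := by
  induction j with
  | zero => exact h
  | succ j ih =>
    refine le_antisymm (obsKer_antitone A C (Nat.le_succ _)) fun v hv => mem_obsKer.2 ?_
    have hAv : A *ᵥ v ∈ obsKer A C (k + j + 1) := by
      rw [ih, mem_obsKer]
      intro i hi
      rw [mulVec_mulVec, Matrix.mul_assoc, ← pow_succ]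
      exact mem_obsKer.1 hv (i + 1) (by omega)
    intro i hi
    rcases Nat.lt_succ_iff_lt_or_eq.1 hi with hi | rfl
    · exact mem_obsKer.1 hv i hi
    · rw [← Nat.add_assoc, pow_succ, ← Matrix.mul_assoc, ← mulVec_mulVec]
      exact mem_obsKer.1 hAv _ (Nat.lt_succ_self _)

lemma obsKer_add_eq {k : ℕ} (h : obsKer A C (k + 1) = obsKer A C k) (j : ℕ) :
    obsKer A C (k + j) = obsKer A C k := by
  induction j with
  | zero => rfl
  | succ j ih => rw [← Nat.add_assoc, obsKer_add_succ_eq h, ih]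

theorem unobservable_of_lag_le {ℓ : ℕ} (hℓ : lag A C ≤ ℓ) {v : Fin n → ℝ}
    (hv : ∀ i < ℓ, (C * A ^ i) *ᵥ v = 0) : Unobservable A C v := by
  intro k
  have hv' : v ∈ obsKer A C (lag A C + (k + 1)) := by
    rw [obsKer_add_eq (obsKer_lag_succ A C)]
    exact obsKer_antitone A C hℓ (mem_obsKer.2 hv)
  exact mem_obsKer.1 hv' k (by omega)

end Observability

section StateTrajectories

variable {n m p : ℕ} (A : Matrix (Fin n) (Fin n) ℝ) (B : Matrix (Fin n) (Fin m) ℝ)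
  (C : Matrix (Fin p) (Fin n) ℝ) (D : Matrix (Fin p) (Fin m) ℝ)

/-- Signals are functions on `ℕ` (a finite signal `w` becomes `Function.extend Fin.val w 0`);
a triple `(u, y, x)` is a trajectory on `[0, T)` when the system equations hold there. -/
def stateTraj (T : ℕ) :
    Submodule ℝ ((ℕ → Fin m → ℝ) × (ℕ → Fin p → ℝ) × (ℕ → Fin n → ℝ)) where
  carrier := {w | ∀ t < T, w.2.2 (t + 1) = A *ᵥ w.2.2 t + B *ᵥ w.1 t ∧
    w.2.1 t = C *ᵥ w.2.2 t + D *ᵥ w.1 t}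
  add_mem' {w w'} h h' t ht := by
    obtain ⟨hx, hy⟩ := h t ht
    obtain ⟨hx', hy'⟩ := h' t ht
    simp only [Prod.fst_add, Prod.snd_add, Pi.add_apply, mulVec_add, hx, hx', hy, hy']
    constructor <;> abel
  zero_mem' := by simp
  smul_mem' c w h t ht := by
    obtain ⟨hx, hy⟩ := h t ht
    simp [mulVec_smul, hx, hy]

variable {A B C D}

lemma mem_stateTraj {T : ℕ} {u : ℕ → Fin m → ℝ} {y : ℕ → Fin p → ℝ} {x : ℕ → Fin n → ℝ} :
    (u, y, x) ∈ stateTraj A B C D T ↔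
      ∀ t < T, x (t + 1) = A *ᵥ x t + B *ᵥ u t ∧ y t = C *ᵥ x t + D *ᵥ u t :=
  Iff.rfl

lemma stateTraj_mono {T T' : ℕ} (h : T' ≤ T) : stateTraj A B C D T ≤ stateTraj A B C D T' :=
  fun _ hw t ht => hw t (ht.trans_le h)

lemma mem_stateTraj_congr {T : ℕ} {u u' : ℕ → Fin m → ℝ} {y y' : ℕ → Fin p → ℝ}
    {x : ℕ → Fin n → ℝ} (hu : ∀ t < T, u t = u' t) (hy : ∀ t < T, y t = y' t)
    (h : (u, y, x) ∈ stateTraj A B C D T) : (u', y', x) ∈ stateTraj A B C D T := fun t ht => by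
  simpa only [hu t ht, hy t ht] using h t ht

lemma shift_mem_stateTraj {T : ℕ} (s : ℕ) {u : ℕ → Fin m → ℝ} {y : ℕ → Fin p → ℝ}
    {x : ℕ → Fin n → ℝ} (h : (u, y, x) ∈ stateTraj A B C D T) :
    (fun t => u (t + s), fun t => y (t + s), fun t => x (t + s)) ∈ stateTraj A B C D (T - s) :=
  fun t ht => by simpa only [Nat.add_right_comm t 1 s] using h (t + s) (by omega)

theorem isTraj_iff_exists_mem_stateTraj {T : ℕ} {u : Fin T → Fin m → ℝ}
    {y : Fin T → Fin p → ℝ} {u' : ℕ → Fin m → ℝ} {y' : ℕ → Fin p → ℝ}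
    (hu : ∀ t : Fin T, u' t = u t) (hy : ∀ t : Fin T, y' t = y t) :
    IsTraj A B C D T u y ↔ ∃ x, (u', y', x) ∈ stateTraj A B C D T := by
  constructor
  · rintro ⟨x, hx⟩
    refine ⟨Function.extend Fin.val x 0, mem_stateTraj.2 fun t ht => ?_⟩
    have hval := Fin.val_injective.extend_apply x 0
    rw [show u' t = u ⟨t, ht⟩ from hu ⟨t, ht⟩, show y' t = y ⟨t, ht⟩ from hy ⟨t, ht⟩,
      hval ⟨t, by omega⟩, hval ⟨t + 1, by omega⟩]
    exact hx ⟨t, ht⟩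
  · rintro ⟨x, hx⟩
    refine ⟨fun t => x t, fun t => ?_⟩
    simpa only [Fin.val_succ, Fin.val_castSucc, hu t, hy t] using mem_stateTraj.1 hx t t.2

lemma Unobservable.pow_mulVec_mem_stateTraj {v : Fin n → ℝ} (hv : Unobservable A C v) (T : ℕ) :
    ((0 : ℕ → Fin m → ℝ), (0 : ℕ → Fin p → ℝ), fun t => (A ^ t) *ᵥ v) ∈
      stateTraj A B C D T :=
  mem_stateTraj.2 fun t _ => ⟨by simp [pow_succ', ← mulVec_mulVec], by simp [mulVec_mulVec, hv t]⟩

lemma mem_stateTraj_zero_input {T : ℕ} {y : ℕ → Fin p → ℝ} {x : ℕ → Fin n → ℝ}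
    (h : (0, y, x) ∈ stateTraj A B C D T) {t : ℕ} (ht : t < T) :
    y t = (C * A ^ t) *ᵥ x 0 := by
  have hx : ∀ t ≤ T, x t = (A ^ t) *ᵥ x 0 := by
    intro t
    induction t with
    | zero => simp
    | succ t ih =>
      intro ht
      rw [(mem_stateTraj.1 h t (by omega)).1, ih (by omega), pow_succ', ← mulVec_mulVec]
      simp
  simpa [hx t ht.le, mulVec_mulVec] using (mem_stateTraj.1 h t ht).2

theorem unobservable_of_output_eq_zero {ℓ T : ℕ} (hlag : lag A C ≤ ℓ) (hℓT : ℓ ≤ T)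
    {y : ℕ → Fin p → ℝ} {x : ℕ → Fin n → ℝ} (h : (0, y, x) ∈ stateTraj A B C D T)
    (hy : ∀ t < ℓ, y t = 0) : Unobservable A C (x 0) :=
  unobservable_of_lag_le hlag fun i hi => by
    rw [← mem_stateTraj_zero_input h (hi.trans_le hℓT), hy i hi]

lemma mem_stateTraj_concat {s T : ℕ} {u : ℕ → Fin m → ℝ} {y : ℕ → Fin p → ℝ}
    {x₁ x₂ : ℕ → Fin n → ℝ} (h₁ : (u, y, x₁) ∈ stateTraj A B C D s)
    (h₂ : (fun t => u (t + s), fun t => y (t + s), x₂) ∈ stateTraj A B C D T)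
    (hx : x₁ s = x₂ 0) :
    (u, y, fun t => if t < s then x₁ t else x₂ (t - s)) ∈ stateTraj A B C D (s + T) := by
  refine mem_stateTraj.2 fun t ht => ?_
  by_cases hts : t < s
  · have hx₁ : (if t + 1 < s then x₁ (t + 1) else x₂ (t + 1 - s)) = x₁ (t + 1) := by
      split_ifs with h
      · rfl
      · rw [show t + 1 = s by omega, Nat.sub_self, hx]
    simpa only [if_pos hts, hx₁] using mem_stateTraj.1 h₁ t hts
  · obtain ⟨i, rfl⟩ : ∃ i, t = i + s := ⟨t - s, by omega⟩
    simpa only [if_neg hts, Nat.add_right_comm i s 1, if_neg (show ¬ i + 1 + s < s by omega),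
      Nat.add_sub_cancel] using mem_stateTraj.1 h₂ i (by omega)

theorem exists_mem_stateTraj_of_overlap {s ℓ T : ℕ} (hlag : lag A C ≤ ℓ) (hℓT : ℓ ≤ T)
    {u : ℕ → Fin m → ℝ} {y : ℕ → Fin p → ℝ} {x₁ x₂ : ℕ → Fin n → ℝ}
    (h₁ : (u, y, x₁) ∈ stateTraj A B C D (s + ℓ))
    (h₂ : (fun t => u (t + s), fun t => y (t + s), x₂) ∈ stateTraj A B C D T) :
    ∃ x, (u, y, x) ∈ stateTraj A B C D (s + T) := by
  have hdiff : (0, 0, (fun t => x₁ (t + s)) - x₂) ∈ stateTraj A B C D ℓ := by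
    have h₁' := stateTraj_mono (T' := ℓ) (by omega) (shift_mem_stateTraj s h₁)
    simpa using sub_mem h₁' (stateTraj_mono hℓT h₂)
  have hd : Unobservable A C (x₁ s - x₂ 0) := by
    simpa using unobservable_of_output_eq_zero hlag le_rfl hdiff fun _ _ => rfl
  have h₂' : (fun t => u (t + s), fun t => y (t + s), x₂ + fun t => (A ^ t) *ᵥ (x₁ s - x₂ 0))
      ∈ stateTraj A B C D T := by
    simpa using add_mem h₂ (hd.pow_mulVec_mem_stateTraj T)
  exact ⟨_, mem_stateTraj_concat (stateTraj_mono (by omega) h₁) h₂' (by simp)⟩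

theorem output_eq_of_eq_on_window {s ℓ T : ℕ} (hlag : lag A C ≤ ℓ) (hT : s + ℓ ≤ T)
    {u : ℕ → Fin m → ℝ} {y y' : ℕ → Fin p → ℝ} {x x' : ℕ → Fin n → ℝ}
    (h : (u, y, x) ∈ stateTraj A B C D T) (h' : (u, y', x') ∈ stateTraj A B C D T)
    (hy : ∀ t < s + ℓ, y t = y' t) {t : ℕ} (ht : t < T) : y t = y' t := by
  by_cases hts : t < s + ℓ
  · exact hy t hts
  have hdiff : (0, y - y', x - x') ∈ stateTraj A B C D T := by simpa using sub_mem h h'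
  replace hdiff := shift_mem_stateTraj s hdiff
  have hd : Unobservable A C (x s - x' s) := by
    simpa using unobservable_of_output_eq_zero hlag (by omega) hdiff
      fun i hi => by simp [hy (i + s) (by omega)]
  obtain ⟨i, rfl⟩ : ∃ i, t = i + s := ⟨t - s, by omega⟩
  have := mem_stateTraj_zero_input hdiff (t := i) (by omega)
  simpa [hd i, sub_eq_zero] using this

lemma hankel_combination_mem_stateTraj {T K : ℕ} (g : Fin (T + 1 - K) → ℝ) {u : ℕ → Fin m → ℝ}
    {y : ℕ → Fin p → ℝ} {x : ℕ → Fin n → ℝ} (h : (u, y, x) ∈ stateTraj A B C D T) :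
    (fun t => ∑ j, g j • u (t + j), fun t => ∑ j, g j • y (t + j),
      fun t => ∑ j, g j • x (t + j)) ∈ stateTraj A B C D K := by
  have hshift (j : Fin (T + 1 - K)) :
      (fun t => u (t + j), fun t => y (t + j), fun t => x (t + j)) ∈ stateTraj A B C D K :=
    stateTraj_mono (by have := j.2; omega) (shift_mem_stateTraj j h)
  have := (stateTraj A B C D K).sum_mem (t := Finset.univ) fun j _ =>
    Submodule.smul_mem _ (g j) (hshift j)
  convert this using 1
  ext <;> simp [Prod.fst_sum, Prod.snd_sum]

lemma hankel_sum_eq_shift {q T Tini Tf ℓ : ℕ} (hℓ : ℓ ≤ Tini) {wd : Fin T → Fin q → ℝ}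
    {wini : Fin Tini → Fin q → ℝ} {wf : Fin Tf → Fin q → ℝ}
    {g₁ : Fin (T + 1 - (ℓ + Tf)) → ℝ} {g₂ : Fin (Tini + 1 - (ℓ + Tf)) → ℝ}
    (hw : ∀ i : Fin (ℓ + Tf),
      (∑ j : Fin (T + 1 - (ℓ + Tf)),
          g₁ j • wd ⟨i + j, hankel_index_lt i j⟩) +
      (∑ j : Fin (Tini + 1 - (ℓ + Tf)),
          g₂ j • wini ⟨i + j, hankel_index_lt i j⟩) =
      Fin.append (fun r : Fin ℓ => wini ⟨Tini - ℓ + r, window_index_lt hℓ r⟩) wf i)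
    {t : ℕ} (ht : t < ℓ + Tf) :
    (∑ j, g₁ j • Function.extend Fin.val wd 0 (t + j)) +
      (∑ j, g₂ j • Function.extend Fin.val (Fin.append wini wf) 0 (t + j)) =
      Function.extend Fin.val (Fin.append wini wf) 0 (t + (Tini - ℓ)) := by
  have hd : ∀ j : Fin (T + 1 - (ℓ + Tf)),
      Function.extend Fin.val wd 0 (t + j) = wd ⟨t + j, by have := j.2; omega⟩ :=
    fun j => Fin.val_injective.extend_apply wd 0 ⟨t + j, _⟩
  have hini : ∀ j : Fin (Tini + 1 - (ℓ + Tf)),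
      Function.extend Fin.val (Fin.append wini wf) 0 (t + j) =
        wini ⟨t + j, by have := j.2; omega⟩ :=
    fun j => extend_val_append_castAdd wini wf ⟨t + j, _⟩
  have hf : Function.extend Fin.val (Fin.append wini wf) 0 (t + (Tini - ℓ)) =
      Fin.append wini wf ⟨Tini - ℓ + t, by omega⟩ := by
    rw [Nat.add_comm t (Tini - ℓ)]
    exact Fin.val_injective.extend_apply _ 0 ⟨Tini - ℓ + t, _⟩
  rw [hf, ← Fin.append_drop_append_apply hℓ wini wf ⟨t, ht⟩, ← hw ⟨t, ht⟩]
  simp only [hd, hini]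

theorem isTraj_append_of_hankel {T Tini Tf ℓ : ℕ} (hlag : lag A C ≤ ℓ) (hℓ : ℓ ≤ Tini)
    {ud : Fin T → Fin m → ℝ} {yd : Fin T → Fin p → ℝ}
    {uini : Fin Tini → Fin m → ℝ} {yini : Fin Tini → Fin p → ℝ}
    {uf : Fin Tf → Fin m → ℝ} {yf : Fin Tf → Fin p → ℝ}
    {g₁ : Fin (T + 1 - (ℓ + Tf)) → ℝ} {g₂ : Fin (Tini + 1 - (ℓ + Tf)) → ℝ}
    (hu : ∀ i : Fin (ℓ + Tf),
      (∑ j : Fin (T + 1 - (ℓ + Tf)),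
          g₁ j • ud ⟨i + j, hankel_index_lt i j⟩) +
      (∑ j : Fin (Tini + 1 - (ℓ + Tf)),
          g₂ j • uini ⟨i + j, hankel_index_lt i j⟩) =
      Fin.append (fun r : Fin ℓ => uini ⟨Tini - ℓ + r, window_index_lt hℓ r⟩) uf i)
    (hy : ∀ i : Fin (ℓ + Tf),
      (∑ j : Fin (T + 1 - (ℓ + Tf)),
          g₁ j • yd ⟨i + j, hankel_index_lt i j⟩) +
      (∑ j : Fin (Tini + 1 - (ℓ + Tf)),
          g₂ j • yini ⟨i + j, hankel_index_lt i j⟩) =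
      Fin.append (fun r : Fin ℓ => yini ⟨Tini - ℓ + r, window_index_lt hℓ r⟩) yf i)
    (hd : IsTraj A B C D T ud yd) (hini : IsTraj A B C D Tini uini yini) :
    IsTraj A B C D (Tini + Tf) (Fin.append uini uf) (Fin.append yini yf) := by
  have hU := Fin.val_injective.extend_apply (Fin.append uini uf) 0
  have hY := Fin.val_injective.extend_apply (Fin.append yini yf) 0
  obtain ⟨xd, hxd⟩ := (isTraj_iff_exists_mem_stateTraj (Fin.val_injective.extend_apply ud 0)
    (Fin.val_injective.extend_apply yd 0)).1 hd
  obtain ⟨xini, hxini⟩ := (isTraj_iff_exists_mem_stateTraj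
    (fun t => extend_val_append_castAdd uini uf t)
    (fun t => extend_val_append_castAdd yini yf t)).1 hini
  have hhankel := add_mem (hankel_combination_mem_stateTraj g₁ hxd)
    (hankel_combination_mem_stateTraj g₂ hxini)
  rw [Prod.mk_add_mk, Prod.mk_add_mk] at hhankel
  have hwindow := mem_stateTraj_congr (fun t ht => hankel_sum_eq_shift hℓ hu ht)
    (fun t ht => hankel_sum_eq_shift hℓ hy ht) hhankel
  obtain ⟨x, hx⟩ := exists_mem_stateTraj_of_overlap (s := Tini - ℓ) hlag le_self_add
    (stateTraj_mono (by omega) hxini) hwindow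
  exact (isTraj_iff_exists_mem_stateTraj hU hY).2 ⟨x, stateTraj_mono (by omega) hx⟩

theorem eq_of_isTraj_append {Tini Tf ℓ : ℕ} (hlag : lag A C ≤ ℓ) (hℓ : ℓ ≤ Tini)
    {uini : Fin Tini → Fin m → ℝ} {yini : Fin Tini → Fin p → ℝ} {uf : Fin Tf → Fin m → ℝ}
    {yf yf' : Fin Tf → Fin p → ℝ}
    (h : IsTraj A B C D (Tini + Tf) (Fin.append uini uf) (Fin.append yini yf))
    (h' : IsTraj A B C D (Tini + Tf) (Fin.append uini uf) (Fin.append yini yf')) :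
    yf = yf' := by
  have hU := Fin.val_injective.extend_apply (Fin.append uini uf) 0
  obtain ⟨x, hx⟩ := (isTraj_iff_exists_mem_stateTraj hU
    (Fin.val_injective.extend_apply (Fin.append yini yf) 0)).1 h
  obtain ⟨x', hx'⟩ := (isTraj_iff_exists_mem_stateTraj hU
    (Fin.val_injective.extend_apply (Fin.append yini yf') 0)).1 h'
  funext i
  have hini : ∀ t < Tini - ℓ + ℓ, Function.extend Fin.val (Fin.append yini yf) 0 t =
      Function.extend Fin.val (Fin.append yini yf') 0 t := fun t ht => by
    rw [extend_val_append_castAdd yini yf ⟨t, by omega⟩,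
      extend_val_append_castAdd yini yf' ⟨t, by omega⟩]
  simpa only [extend_val_append_natAdd] using
    output_eq_of_eq_on_window hlag (by omega) hx hx' hini (t := Tini + i) (by omega)

end StateTrajectories

/-- If the stacked vector consisting of the last `ℓ` samples of the initial trajectory
followed by the future input/output can be written as a combination of the columns of the
depth-`(ℓ + Tf)` Hankel matrices of the data and of the initial trajectory, then every
explaining system has `(uini·uf, yini·yf)` as a trajectory, `yf` is the unique such
output for each explaining system, and the data is informative for unique prediction. -/
theorem predict_informative {m p : ℕ} (L N T Tini Tf ℓ : ℕ)
    (ud : Fin T → Fin m → ℝ) (yd : Fin T → Fin p → ℝ)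
    (uini : Fin Tini → Fin m → ℝ) (yini : Fin Tini → Fin p → ℝ)
    (uf : Fin Tf → Fin m → ℝ)
    (hTini : ℓ ≤ Tini)
    (hℓ : ∀ (n' : ℕ) (A' : Matrix (Fin n') (Fin n') ℝ) (B' : Matrix (Fin n') (Fin m) ℝ)
      (C' : Matrix (Fin p) (Fin n') ℝ) (D' : Matrix (Fin p) (Fin m) ℝ),
      Explaining L N T Tini ud yd uini yini A' B' C' D' → lag A' C' ≤ ℓ)
    (yf : Fin Tf → Fin p → ℝ)
    (g₁ : Fin (T + 1 - (ℓ + Tf)) → ℝ)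
    (g₂ : Fin (Tini + 1 - (ℓ + Tf)) → ℝ)
    (hu : ∀ i : Fin (ℓ + Tf),
      (∑ j : Fin (T + 1 - (ℓ + Tf)),
          g₁ j • ud ⟨i + j, by have := i.2; have := j.2; omega⟩) +
      (∑ j : Fin (Tini + 1 - (ℓ + Tf)),
          g₂ j • uini ⟨i + j, by have := i.2; have := j.2; omega⟩) =
      Fin.append (fun r : Fin ℓ => uini ⟨Tini - ℓ + r, by have := r.2; omega⟩) uf i)
    (hy : ∀ i : Fin (ℓ + Tf),
      (∑ j : Fin (T + 1 - (ℓ + Tf)),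
          g₁ j • yd ⟨i + j, by have := i.2; have := j.2; omega⟩) +
      (∑ j : Fin (Tini + 1 - (ℓ + Tf)),
          g₂ j • yini ⟨i + j, by have := i.2; have := j.2; omega⟩) =
      Fin.append (fun r : Fin ℓ => yini ⟨Tini - ℓ + r, by have := r.2; omega⟩) yf i) :
    (∀ (n' : ℕ) (A' : Matrix (Fin n') (Fin n') ℝ) (B' : Matrix (Fin n') (Fin m) ℝ)
        (C' : Matrix (Fin p) (Fin n') ℝ) (D' : Matrix (Fin p) (Fin m) ℝ),
        Explaining L N T Tini ud yd uini yini A' B' C' D' →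
        IsTraj A' B' C' D' (Tini + Tf) (Fin.append uini uf) (Fin.append yini yf) ∧
        ∀ yf' : Fin Tf → Fin p → ℝ,
          IsTraj A' B' C' D' (Tini + Tf) (Fin.append uini uf) (Fin.append yini yf') →
          yf' = yf) ∧
    Informative L N T Tini Tf ud yd uini yini uf := by
  have hpred (n' : ℕ) (A' : Matrix (Fin n') (Fin n') ℝ) (B' : Matrix (Fin n') (Fin m) ℝ)
      (C' : Matrix (Fin p) (Fin n') ℝ) (D' : Matrix (Fin p) (Fin m) ℝ)
      (hE : Explaining L N T Tini ud yd uini yini A' B' C' D') :=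
    have hlag := hℓ n' A' B' C' D' hE
    have htraj := isTraj_append_of_hankel hlag hTini hu hy hE.2.2.1 hE.2.2.2
    And.intro htraj fun (yf' : Fin Tf → Fin p → ℝ) h' =>
      eq_of_isTraj_append (yf := yf') hlag hTini h' htraj
  exact ⟨hpred, fun n' A' B' C' D' hE => ⟨yf, hpred n' A' B' C' D' hE⟩,
    yf, fun n' A' B' C' D' hE => (hpred n' A' B' C' D' hE).1⟩
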